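/- arXiv:math/0611935 — 4 statements merged into one kernel-verified Lean document; each statement's English description precedes it below -/
import Mathlib

section
/- Let A be a bounded linear operator on a complex Banach space X, generating the (uniformly continuous) semigroup e^{tA}. Then for every bounded projection P on X, every x ∈ X and every t ≥ 0, the sequence (e^{(t/n)A} P)^n x converges in X as n → ∞. -/
/-!
With `b = p a p`, the limit is `exp (z • b) * p`. Since `(e * p) ^ (n + 1) = e * (p e p) ^ n * p`,
it suffices to compare `w = p * exp ((z / n) • a) * p` with `v = exp ((z / n) • b) * p`. The map
`s ↦ p * exp (s • a) * p - exp (s • b) * p` vanishes to first order at `0`, so `‖w - v‖ = o(1/n)`,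
while the powers `v ^ j = exp ((j * z / n) • b) * p ^ j`, `j ≤ n`, stay bounded. Telescoping
`w ^ n - v ^ n` then gives `‖w ^ n - v ^ n‖ ≤ M ((1 + M ‖w - v‖) ^ n - 1) → 0`.
-/

open Filter Topology Finset NormedSpace

section PowerStability

variable {R : Type*} [NormedRing R]

theorem pow_sub_pow_eq_sum (w v : R) (k : ℕ) :
    w ^ k - v ^ k = ∑ j ∈ range k, w ^ j * (w - v) * v ^ (k - 1 - j) := by
  have htel := sum_range_sub (fun j => w ^ j * v ^ (k - j)) k
  simp only [Nat.sub_self, Nat.sub_zero, pow_zero, mul_one, one_mul] at htel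
  rw [← htel]
  refine sum_congr rfl fun j hj => ?_
  obtain ⟨m, rfl⟩ : ∃ m, k = j + 1 + m := ⟨k - (j + 1), by have := mem_range.1 hj; omega⟩
  rw [show j + 1 + m - j = m + 1 by omega, show j + 1 + m - (j + 1) = m by omega,
    show j + 1 + m - 1 - j = m by omega, pow_succ, pow_succ' v]
  noncomm_ring

theorem norm_pow_sub_pow_le {w v : R} {M : ℝ} {k : ℕ} (hv : ∀ j ≤ k, ‖v ^ j‖ ≤ M) :
    ‖w ^ k - v ^ k‖ ≤ M * ((1 + M * ‖w - v‖) ^ k - 1) := by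
  set q := 1 + M * ‖w - v‖
  induction k using Nat.strong_induction_on with
  | _ k ih =>
  have hw : ∀ j < k, ‖w ^ j‖ ≤ M * q ^ j := fun j hj => by
    have := ih j hj fun i hi => hv i (by omega)
    calc ‖w ^ j‖ ≤ ‖w ^ j - v ^ j‖ + ‖v ^ j‖ := norm_le_norm_sub_add _ _
      _ ≤ M * (q ^ j - 1) + M := add_le_add this (hv j hj.le)
      _ = M * q ^ j := by ring
  calc ‖w ^ k - v ^ k‖
      ≤ ∑ j ∈ range k, ‖w ^ j * (w - v) * v ^ (k - 1 - j)‖ := by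
        rw [pow_sub_pow_eq_sum]; exact norm_sum_le _ _
    _ ≤ ∑ j ∈ range k, M * q ^ j * ‖w - v‖ * M := by
        refine sum_le_sum fun j hj => ?_
        have hj := mem_range.1 hj
        refine norm_mul₃_le.trans (mul_le_mul (mul_le_mul_of_nonneg_right (hw j hj)
          (norm_nonneg _)) (hv _ (by omega)) (norm_nonneg _) ?_)
        exact mul_nonneg ((norm_nonneg _).trans (hw j hj)) (norm_nonneg _)
    _ = M * ((∑ j ∈ range k, q ^ j) * (q - 1)) := by
        rw [sum_mul, mul_sum]; refine sum_congr rfl fun j _ => ?_; simp only [q]; ring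
    _ = M * (q ^ k - 1) := by rw [geom_sum_mul]

theorem tendsto_pow_sub_pow_of_tendsto_mul_norm_sub {ι : Type*} {l : Filter ι} {w v : ι → R}
    {k : ι → ℕ} {M : ℝ} (hv : ∀ᶠ i in l, ∀ j ≤ k i, ‖v i ^ j‖ ≤ M)
    (hwv : Tendsto (fun i => (k i : ℝ) * ‖w i - v i‖) l (𝓝 0)) :
    Tendsto (fun i => w i ^ k i - v i ^ k i) l (𝓝 0) := by
  have hlim : Tendsto (fun i => M * (Real.exp (M * ((k i : ℝ) * ‖w i - v i‖)) - 1)) l (𝓝 0) := by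
    simpa using ((hwv.const_mul M).rexp.sub_const 1).const_mul M
  refine squeeze_zero_norm' ?_ hlim
  filter_upwards [hv] with i hi
  have hM : 0 ≤ M := (norm_nonneg _).trans (hi 0 (Nat.zero_le _))
  refine (norm_pow_sub_pow_le hi).trans (mul_le_mul_of_nonneg_left ?_ hM)
  gcongr
  calc (1 + M * ‖w i - v i‖) ^ k i ≤ Real.exp (M * ‖w i - v i‖) ^ k i := by
        gcongr; linarith [Real.add_one_le_exp (M * ‖w i - v i‖)]
    _ = Real.exp (M * ((k i : ℝ) * ‖w i - v i‖)) := by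
        rw [← Real.exp_nat_mul]; ring_nf

end PowerStability

section Idempotent

variable {M : Type*} [Monoid M] {p : M}

theorem IsIdempotentElem.commute_mul_mul (hp : IsIdempotentElem p) (a : M) :
    Commute (p * a * p) p := by
  rw [Commute, SemiconjBy, mul_assoc _ p p, hp.eq, ← mul_assoc p (p * a), ← mul_assoc p p, hp.eq]

theorem IsIdempotentElem.mul_pow_succ (hp : IsIdempotentElem p) (e : M) (k : ℕ) :
    (e * p) ^ (k + 1) = e * (p * e * p) ^ k * p := by
  induction k with
  | zero => simp
  | succ k ih =>
    rw [pow_succ, ih, pow_succ]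
    simp only [mul_assoc, hp.eq]

theorem IsIdempotentElem.mul_pow_mul_of_commute (hp : IsIdempotentElem p) {x : M}
    (hx : Commute x p) (k : ℕ) : (x * p) ^ k * p = x ^ k * p := by
  rw [hx.mul_pow, mul_assoc, ← pow_succ, hp.pow_succ_eq]

end Idempotent

theorem tendsto_natCast_mul_norm_div_of_hasDerivAt_zero {𝕂 E : Type*} [RCLike 𝕂]
    [NormedAddCommGroup E] [NormedSpace 𝕂 E] {g : 𝕂 → E} (hg : HasDerivAt g 0 0) (hg0 : g 0 = 0)
    (z : 𝕂) : Tendsto (fun n : ℕ => (n : ℝ) * ‖g (z / n)‖) atTop (𝓝 0) := by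
  have hlo : g =o[𝓝 0] fun s => s := by simpa [hg0] using hg.isLittleO
  have hbdd : (fun n : ℕ => (n : ℝ) * ‖z / n‖) =O[atTop] (fun _ => (1 : ℝ)) := by
    refine (Asymptotics.isBigO_const_const ‖z‖ one_ne_zero atTop).congr' ?_ EventuallyEq.rfl
    filter_upwards [eventually_ne_atTop 0] with n hn
    rw [norm_div, RCLike.norm_natCast]; field_simp
  refine (Asymptotics.isLittleO_one_iff ℝ).1 (Asymptotics.IsLittleO.trans_isBigO ?_ hbdd)
  exact (Asymptotics.isBigO_refl _ _).mul_isLittleO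
    (hlo.comp_tendsto (tendsto_const_div_atTop_nhds_zero_nat z)).norm_norm

section Corner

variable {𝕂 𝔸 : Type*} [RCLike 𝕂] [NormedRing 𝔸] [NormedAlgebra 𝕂 𝔸] [CompleteSpace 𝔸]

theorem hasDerivAt_mul_exp_smul_mul_sub_exp_smul_mul {p : 𝔸} (hp : IsIdempotentElem p) (a : 𝔸) :
    HasDerivAt (fun s : 𝕂 => p * exp (s • a) * p - exp (s • (p * a * p)) * p) 0 0 := by
  have ha := ((hasDerivAt_exp_smul_const a (0 : 𝕂)).const_mul p).mul_const p
  have hb := (hasDerivAt_exp_smul_const (p * a * p) (0 : 𝕂)).mul_const p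
  have h0 : p * (exp ((0 : 𝕂) • a) * a) * p - exp ((0 : 𝕂) • (p * a * p)) * (p * a * p) * p
      = 0 := by
    simp [mul_assoc, hp.eq]
  exact h0 ▸ ha.sub hb

theorem exists_norm_pow_exp_div_smul_mul_le {p b : 𝔸} (hp : IsIdempotentElem p)
    (hbp : Commute b p) (z : 𝕂) :
    ∃ M, ∀ n : ℕ, ∀ j ≤ n, ‖(exp ((z / n) • b) * p) ^ j‖ ≤ M := by
  let _ : NormedAlgebra ℚ 𝔸 := .restrictScalars ℚ 𝕂 𝔸
  obtain ⟨C, hC⟩ := (isCompact_Icc : IsCompact (Set.Icc (0 : ℝ) 1)).exists_bound_of_continuousOn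
    (f := fun s : ℝ => exp (((s : 𝕂) * z) • b)) (by fun_prop)
  have hC0 : 0 ≤ C := (norm_nonneg _).trans (hC 0 (by simp))
  refine ⟨C * (‖(1 : 𝔸)‖ + ‖p‖), fun n j hj => ?_⟩
  have hpow : (exp ((z / n) • b) * p) ^ j = exp ((((j / n : ℝ) : 𝕂) * z) • b) * p ^ j := by
    rw [((hbp.smul_left _).exp_left).mul_pow, ← exp_nsmul, ← Nat.cast_smul_eq_nsmul 𝕂, smul_smul]
    push_cast; ring_nf
  have hpj : ‖p ^ j‖ ≤ ‖(1 : 𝔸)‖ + ‖p‖ := by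
    rcases j with _ | j
    · simp
    · simp [hp.pow_succ_eq]
  have hjn : (j / n : ℝ) ≤ 1 := div_le_one_of_le₀ (by exact_mod_cast hj) (Nat.cast_nonneg n)
  rw [hpow]
  exact (norm_mul_le _ _).trans
    (mul_le_mul (hC _ ⟨by positivity, hjn⟩) hpj (norm_nonneg _) hC0)

theorem tendsto_exp_div_smul_mul_pow {p : 𝔸} (hp : IsIdempotentElem p) (a : 𝔸) (z : 𝕂) :
    Tendsto (fun n : ℕ => (exp ((z / n) • a) * p) ^ n) atTop (𝓝 (exp (z • (p * a * p)) * p)) := by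
  -- `exp_nsmul` and `Tendsto.exp` are stated for `ℚ`-algebras
  let _ : NormedAlgebra ℚ 𝔸 := .restrictScalars ℚ 𝕂 𝔸
  set b := p * a * p
  have hbp : ∀ s : 𝕂, Commute (exp (s • b)) p := fun s =>
    ((hp.commute_mul_mul a).smul_left s).exp_left
  set c : ℕ → 𝕂 := fun n => z / (n + 1 : ℕ)
  set w : ℕ → 𝔸 := fun n => p * exp (c n • a) * p
  set v : ℕ → 𝔸 := fun n => exp (c n • b) * p
  have hsplit : ∀ n : ℕ, (exp (c n • a) * p) ^ (n + 1) = exp (c n • a) * (w n ^ n - v n ^ n) * p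
      + exp (c n • a) * exp (((n : 𝕂) * c n) • b) * p := fun n => by
    rw [hp.mul_pow_succ, mul_sub, sub_mul, mul_assoc _ (v n ^ n), hp.mul_pow_mul_of_commute (hbp _),
      ← exp_nsmul, ← Nat.cast_smul_eq_nsmul 𝕂, smul_smul]
    simp only [w, mul_assoc, sub_add_cancel]
  have hc : Tendsto c atTop (𝓝 0) :=
    (tendsto_const_div_atTop_nhds_zero_nat z).comp (tendsto_add_atTop_nat 1)
  have hnc : Tendsto (fun n : ℕ => (n : 𝕂) * c n) atTop (𝓝 z) := by
    refine (sub_zero z ▸ tendsto_const_nhds.sub hc).congr fun n => ?_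
    simp only [c]; field_simp; push_cast; ring
  have hwv : Tendsto (fun n : ℕ => (n : ℝ) * ‖w n - v n‖) atTop (𝓝 0) := by
    have h := (tendsto_natCast_mul_norm_div_of_hasDerivAt_zero
      (hasDerivAt_mul_exp_smul_mul_sub_exp_smul_mul hp a) (by simp [hp.eq]) z).comp
      (tendsto_add_atTop_nat 1)
    refine squeeze_zero (fun n => by positivity) (fun n => ?_) h
    exact mul_le_mul_of_nonneg_right (by push_cast; linarith) (norm_nonneg _)
  obtain ⟨M, hM⟩ := exists_norm_pow_exp_div_smul_mul_le hp (hp.commute_mul_mul a) z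
  have hdiff := tendsto_pow_sub_pow_of_tendsto_mul_norm_sub
    (Eventually.of_forall fun n j hj => hM (n + 1) j (hj.trans n.le_succ)) hwv
  rw [← tendsto_add_atTop_iff_nat 1]
  refine Tendsto.congr (fun n => (hsplit n).symm) ?_
  have he := (hc.smul_const a).exp
  simpa only [zero_smul, exp_zero, one_mul, zero_mul, zero_add] using
    ((he.mul hdiff).mul_const p).add ((he.mul (hnc.smul_const b).exp).mul_const p)

end Corner

theorem stmt_1_general {X : Type*} [NormedAddCommGroup X] [NormedSpace ℂ X] [CompleteSpace X]
    (A : X →L[ℂ] X) (P : X →L[ℂ] X) (hP : P.comp P = P)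
    (x : X) (t : ℝ) :
    ∃ y : X,
      Tendsto
        (fun n : ℕ =>
          (((NormedSpace.exp (((t / n : ℝ) : ℂ) • A)).comp P) ^ n) x)
        atTop (𝓝 y) := by
  refine ⟨(exp ((t : ℂ) • (P * A * P)) * P) x, ?_⟩
  have h := tendsto_exp_div_smul_mul_pow (𝕂 := ℂ) (hP : IsIdempotentElem P) A t
  refine (((ContinuousLinearMap.apply ℂ X x).continuous.tendsto _).comp h).congr fun n => ?_
  simp only [Function.comp_apply, ContinuousLinearMap.apply_apply, Complex.ofReal_div,
    Complex.ofReal_natCast, ContinuousLinearMap.mul_def]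

/-- for a bounded generator `A`, the products `(e^{(t/n)A} P)^n x`
converge for every bounded projection `P`, every `x ∈ X` and every `t ≥ 0`. -/
theorem stmt_1 {X : Type*} [NormedAddCommGroup X] [NormedSpace ℂ X] [CompleteSpace X]
    (A : X →L[ℂ] X) (P : X →L[ℂ] X) (hP : P.comp P = P)
    (x : X) (t : ℝ) (ht : 0 ≤ t) :
    ∃ y : X,
      Tendsto
        (fun n : ℕ =>
          (((NormedSpace.exp (((t / n : ℝ) : ℂ) • A)).comp P) ^ n) x)
        atTop (𝓝 y) :=
  stmt_1_general A P hP x t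
end

section
/- Let A be the generator of a C₀-semigroup (e^{tA})_{t≥0} on a complex Banach space X, and assume A is unbounded. Then there exist a bounded rank-one projection P on X and a vector y ∈ X such that the sequence (e^{(1/n)A} P)^n y does not converge, not even weakly, as n → ∞. Moreover P can be taken of the form Pz = φ(z)y for a suitable φ ∈ X* with φ(y) = 1. -/
/-!
Write `Bₙ = n (T(1/n) - 1)`. If every sequence `Bₙ y` is bounded, Banach–Steinhaus gives
`‖Bₙ‖ ≤ c`, hence `‖T t - 1‖ ≤ e^{ct} - 1` (first on the grid `k/n` since `T(k/n) = T(1/n)^k`,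
then by strong continuity). The difference quotients `(T t - 1)/t` are then uniformly bounded
as `t → 0⁺` and converge on the dense set of vectors `∫₀^δ T s w ds`, hence everywhere: `A` is
bounded and everywhere defined.

Otherwise some `Bₙ y` is unbounded; Banach–Steinhaus and a rotation by a unit `μ` give
`φ` and `Y` with `φ Y = 1` and `Re φ(Bₙ Y)` unbounded above. For `P = φ(·) Y` one has
`φ((T(1/n) P)ⁿ Y) = wₙⁿ` with `wₙ = φ(T(1/n) Y)`, and Bernoulli's inequality gives
`|wₙⁿ| ≥ 1 + n (Re wₙ - 1) = 1 + Re φ(Bₙ Y)` whenever the right side is `≥ 1`. So the scalar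
sequence `φ((T(1/n) P)ⁿ Y)` is unbounded and cannot converge.
-/

open Filter Topology

/-- A C₀-semigroup on a complex normed space `X`: a strongly continuous map
`T : [0,∞) → B(X)` with `T 0 = I` and `T (s+t) = T s ∘ T t`. -/
structure C0Semigroup (X : Type*) [NormedAddCommGroup X] [NormedSpace ℂ X] where
  T : ℝ → X →L[ℂ] X
  T_zero : T 0 = 1
  T_add : ∀ s t : ℝ, 0 ≤ s → 0 ≤ t → T (s + t) = (T s).comp (T t)
  T_cont : ∀ x : X, ContinuousOn (fun t => T t x) (Set.Ici (0 : ℝ))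

/-- `A`, with domain `domA`, is the generator of the C₀-semigroup `Sg`:
`domA` is exactly the set of `x ∈ X` for which `(T t x - x)/t` converges as
`t → 0⁺`, and `A x` is this limit. -/
def IsGeneratorOf {X : Type*} [NormedAddCommGroup X] [NormedSpace ℂ X]
    (Sg : C0Semigroup X) (domA : Set X) (A : X → X) : Prop :=
  (∀ x : X, x ∈ domA ↔
      ∃ y : X, Tendsto (fun t : ℝ => t⁻¹ • (Sg.T t x - x)) (𝓝[>] 0) (𝓝 y)) ∧
  (∀ x ∈ domA, Tendsto (fun t : ℝ => t⁻¹ • (Sg.T t x - x)) (𝓝[>] 0) (𝓝 (A x)))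

open Set MeasureTheory

theorem norm_pow_sub_one_le {R : Type*} [NormedRing R] (a : R) (k : ℕ) :
    ‖a ^ k - 1‖ ≤ (1 + ‖a - 1‖) ^ k - 1 := by
  induction k with
  | zero => simp
  | succ k ih =>
    have hsplit : a ^ (k + 1) - 1 = (a - 1) * (a ^ k - 1) + (a ^ k - 1) + (a - 1) := by
      rw [pow_succ']; noncomm_ring
    calc ‖a ^ (k + 1) - 1‖ ≤ ‖a - 1‖ * ‖a ^ k - 1‖ + ‖a ^ k - 1‖ + ‖a - 1‖ := by
          rw [hsplit]
          exact (norm_add₃_le).trans (by gcongr; exact norm_mul_le _ _)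
      _ ≤ ‖a - 1‖ * ((1 + ‖a - 1‖) ^ k - 1) + ((1 + ‖a - 1‖) ^ k - 1) + ‖a - 1‖ := by
          gcongr
      _ = (1 + ‖a - 1‖) ^ (k + 1) - 1 := by ring

theorem Real.exp_sub_one_le_mul_exp (x : ℝ) : Real.exp x - 1 ≤ x * Real.exp x := by
  have h := Real.one_sub_le_exp_neg x
  have hx := Real.exp_pos x
  rw [Real.exp_neg] at h
  have := mul_le_mul_of_nonneg_right h hx.le
  rw [inv_mul_cancel₀ hx.ne'] at this
  linarith

theorem one_add_mul_re_sub_one_le_norm_pow (w : ℂ) (n : ℕ) (h : 0 ≤ n * (w.re - 1)) :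
    1 + n * (w.re - 1) ≤ ‖w ^ n‖ := by
  rcases n.eq_zero_or_pos with rfl | hn
  · simp
  have hre : 0 ≤ w.re - 1 := nonneg_of_mul_nonneg_right h (by positivity)
  calc 1 + n * (w.re - 1) ≤ (1 + (w.re - 1)) ^ n := one_add_mul_le_pow (by linarith) n
    _ ≤ ‖w‖ ^ n := pow_le_pow_left₀ (by linarith) (by simpa using w.re_le_norm) n
    _ = ‖w ^ n‖ := (norm_pow w n).symm

theorem exists_not_bddAbove_re_mul {ι : Type*} {c : ι → ℂ} (h : ¬ ∃ C, ∀ i, ‖c i‖ ≤ C) :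
    ∃ μ : ℂ, ¬ BddAbove (range fun i => (μ * c i).re) := by
  by_contra! hbdd
  obtain ⟨a, ha⟩ := hbdd 1
  obtain ⟨b, hb⟩ := hbdd (-1)
  obtain ⟨d, hd⟩ := hbdd Complex.I
  obtain ⟨e, he⟩ := hbdd (-Complex.I)
  refine h ⟨max a b + max d e, fun i => ?_⟩
  have h1 := ha ⟨i, rfl⟩
  have h2 := hb ⟨i, rfl⟩
  have h3 := hd ⟨i, rfl⟩
  have h4 := he ⟨i, rfl⟩
  simp only [one_mul, neg_mul, Complex.neg_re, Complex.I_mul_re] at h1 h2 h3 h4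
  calc ‖c i‖ ≤ |(c i).re| + |(c i).im| := Complex.norm_le_abs_re_add_abs_im _
    _ ≤ max a b + max d e := by
      gcongr <;> rw [abs_le] <;> constructor <;> linarith [le_max_left a b, le_max_right a b,
        le_max_left d e, le_max_right d e]

theorem exists_norm_le_of_forall_exists_norm_dual_le {𝕜 E ι : Type*} [RCLike 𝕜]
    [NormedAddCommGroup E] [NormedSpace 𝕜 E] {b : ι → E}
    (h : ∀ ψ : StrongDual 𝕜 E, ∃ C, ∀ i, ‖ψ (b i)‖ ≤ C) : ∃ C, ∀ i, ‖b i‖ ≤ C := by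
  obtain ⟨C, hC⟩ :=
    banach_steinhaus (g := fun i => NormedSpace.inclusionInDoubleDual 𝕜 E (b i)) h
  exact ⟨C, fun i => (NormedSpace.inclusionInDoubleDualLi 𝕜).norm_map (b i) ▸ hC i⟩

theorem ContinuousLinearMap.apply_pow_comp_smulRight_apply {𝕜 E : Type*}
    [NontriviallyNormedField 𝕜] [NormedAddCommGroup E] [NormedSpace 𝕜 E] (L : E →L[𝕜] E)
    {φ : StrongDual 𝕜 E} {y : E} (hy : φ y = 1) (n : ℕ) :
    φ (((L.comp (φ.smulRight y)) ^ n) y) = φ (L y) ^ n := by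
  induction n with
  | zero => simpa using hy
  | succ n ih =>
    rw [pow_succ', mul_apply_eq_comp, ContinuousLinearMap.comp_apply,
      ContinuousLinearMap.smulRight_apply, map_smul, map_smul, ih, smul_eq_mul, pow_succ]

theorem ContinuousLinearMap.exists_tendsto_of_dense {ι 𝕜 E F : Type*} [NontriviallyNormedField 𝕜]
    [NormedAddCommGroup E] [NormedSpace 𝕜 E] [NormedAddCommGroup F] [NormedSpace 𝕜 F]
    [CompleteSpace F] {l : Filter ι} [l.NeBot] {T : ι → E →L[𝕜] F} {M : ℝ}
    (hT : ∀ᶠ i in l, ‖T i‖ ≤ M) (hD : Dense {x | ∃ y, Tendsto (fun i => T i x) l (𝓝 y)})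
    (x : E) : ∃ y, Tendsto (fun i => T i x) l (𝓝 y) := by
  obtain ⟨i₀, hi₀⟩ := hT.exists
  have hM : 0 ≤ M := (norm_nonneg _).trans hi₀
  refine cauchy_map_iff_exists_tendsto.mp (cauchy_map_iff'.mpr ?_)
  rw [tendsto_uniformity_iff_dist_tendsto_zero, Metric.tendsto_nhds]
  intro ε hε
  obtain ⟨y, ⟨z, hz⟩, hxy⟩ := Metric.mem_closure_iff.mp (hD x) (ε / (4 * (M + 1))) (by positivity)
  have hy : ∀ᶠ p in l ×ˢ l, dist (T p.1 y) (T p.2 y) < ε / 2 :=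
    tendsto_uniformity_iff_dist_tendsto_zero.mp (cauchy_map_iff'.mp hz.cauchy_map)
      |>.eventually (gt_mem_nhds (half_pos hε)) |>.mono fun _ h => by simpa using h
  filter_upwards [hy, hT.prod_mk hT] with p hp ⟨h1, h2⟩
  have hxy' : 2 * M * dist x y < ε / 2 := by
    calc 2 * M * dist x y ≤ 2 * (M + 1) * dist x y := by gcongr; linarith
      _ < 2 * (M + 1) * (ε / (4 * (M + 1))) := by gcongr
      _ = ε / 2 := by field_simp; ring
  rw [Real.dist_0_eq_abs, abs_of_nonneg dist_nonneg]
  calc dist (T p.1 x) (T p.2 x)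
      ≤ dist (T p.1 x) (T p.1 y) + dist (T p.1 y) (T p.2 y) + dist (T p.2 y) (T p.2 x) :=
        dist_triangle4 _ _ _ _
    _ ≤ M * dist x y + dist (T p.1 y) (T p.2 y) + M * dist x y := by
        gcongr
        · exact ((T p.1).dist_le_opNorm x y).trans (by gcongr)
        · rw [dist_comm x y]; exact ((T p.2).dist_le_opNorm y x).trans (by gcongr)
    _ < ε := by linarith

theorem HasDerivWithinAt.tendsto_slope_zero_right_of_Ici {E : Type*} [NormedAddCommGroup E]
    [NormedSpace ℝ E] {f : ℝ → E} {f' : E} {x : ℝ} (h : HasDerivWithinAt f f' (Ici x) x) :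
    Tendsto (fun t => t⁻¹ • (f (x + t) - f x)) (𝓝[>] 0) (𝓝 f') := by
  have hslope := (hasDerivWithinAt_iff_tendsto_slope' (lt_irrefl x)).mp
    (h.mono Ioi_subset_Ici_self)
  have hshift : Tendsto (fun t => x + t) (𝓝[>] 0) (𝓝[>] x) := by
    refine tendsto_nhdsWithin_of_tendsto_nhds_of_eventually_within _
      (((continuous_const_add x).tendsto' 0 x (add_zero x)).mono_left nhdsWithin_le_nhds) ?_
    exact eventually_nhdsWithin_of_forall fun t (ht : 0 < t) => lt_add_of_pos_right x ht
  simpa [Function.comp_def, slope_def_module] using hslope.comp hshift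

namespace C0Semigroup

variable {X : Type*} [NormedAddCommGroup X] [NormedSpace ℂ X] (S : C0Semigroup X)

theorem T_natCast_mul {t : ℝ} (ht : 0 ≤ t) (k : ℕ) : S.T (k * t) = S.T t ^ k := by
  induction k with
  | zero => simpa using S.T_zero
  | succ k ih =>
    rw [Nat.cast_succ, add_one_mul, S.T_add _ _ (by positivity) ht, ih, pow_succ]
    rfl

noncomputable def diffQuot (t : ℝ) : X →L[ℂ] X := t⁻¹ • (S.T t - 1)

@[simp]
theorem diffQuot_apply (t : ℝ) (x : X) : S.diffQuot t x = t⁻¹ • (S.T t x - x) := by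
  simp [diffQuot]

/-- The domain of the generator. -/
def genDomain : Set X := {x | ∃ y, Tendsto (fun t => S.diffQuot t x) (𝓝[>] 0) (𝓝 y)}

theorem smul_mem_genDomain (c : ℂ) {x : X} (hx : x ∈ S.genDomain) : c • x ∈ S.genDomain := by
  obtain ⟨y, hy⟩ := hx
  exact ⟨c • y, by simpa only [map_smul] using hy.const_smul c⟩

theorem intervalIntegrable_T (w : X) {a b : ℝ} (ha : 0 ≤ a) (hb : 0 ≤ b) :
    IntervalIntegrable (fun s => S.T s w) volume a b :=
  ((S.T_cont w).mono fun _ hs => (le_inf ha hb).trans hs.1).intervalIntegrable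

theorem re_apply_diffQuot_inv_natCast {φ : StrongDual ℂ X} {y : X} (hy : φ y = 1) (n : ℕ) :
    (φ (S.diffQuot (n : ℝ)⁻¹ y)).re = n * ((φ (S.T (n : ℝ)⁻¹ y)).re - 1) := by
  simp [hy]

theorem bddAbove_re_apply_diffQuot_of_tendsto {φ : StrongDual ℂ X} {y : X} (hy : φ y = 1)
    {a : ℂ} (h : Tendsto (fun n : ℕ => φ ((((S.T (n : ℝ)⁻¹).comp (φ.smulRight y)) ^ n) y))
      atTop (𝓝 a)) :
    BddAbove (range fun n : ℕ => (φ (S.diffQuot (n : ℝ)⁻¹ y)).re) := by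
  simp_rw [ContinuousLinearMap.apply_pow_comp_smulRight_apply _ hy] at h
  obtain ⟨K, hK⟩ := h.norm.bddAbove_range
  refine ⟨K, forall_mem_range.2 fun n => ?_⟩
  have hn := hK ⟨n, rfl⟩
  rw [S.re_apply_diffQuot_inv_natCast hy]
  rcases le_or_gt 0 (n * ((φ (S.T (n : ℝ)⁻¹ y)).re - 1)) with h0 | h0
  · linarith [one_add_mul_re_sub_one_le_norm_pow _ n h0]
  · linarith [norm_nonneg (φ (S.T (n : ℝ)⁻¹ y) ^ n)]

theorem norm_T_inv_natCast_sub_one_le {c : ℝ} (hc : ∀ n : ℕ, ‖S.diffQuot (n : ℝ)⁻¹‖ ≤ c)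
    (n : ℕ) : ‖S.T (n : ℝ)⁻¹ - 1‖ ≤ c / n := by
  rcases n.eq_zero_or_pos with rfl | hn
  · simp [S.T_zero]
  rw [le_div_iff₀ (by positivity), mul_comm]
  simpa [diffQuot, norm_smul] using hc n

theorem norm_T_div_natCast_sub_one_le {c : ℝ} (hc : ∀ n : ℕ, ‖S.diffQuot (n : ℝ)⁻¹‖ ≤ c)
    (k n : ℕ) : ‖S.T (k / n) - 1‖ ≤ Real.exp (c * (k / n)) - 1 := by
  have hc0 : 0 ≤ c := (norm_nonneg _).trans (hc 0)
  rw [div_eq_mul_inv, S.T_natCast_mul (by positivity)]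
  calc ‖S.T (n : ℝ)⁻¹ ^ k - 1‖ ≤ (1 + ‖S.T (n : ℝ)⁻¹ - 1‖) ^ k - 1 := norm_pow_sub_one_le _ k
    _ ≤ (1 + c / n) ^ k - 1 := by gcongr; exact S.norm_T_inv_natCast_sub_one_le hc n
    _ ≤ Real.exp (c / n) ^ k - 1 := by
        gcongr
        linarith [Real.add_one_le_exp (c / n)]
    _ = Real.exp (c * (k * (n : ℝ)⁻¹)) - 1 := by
        rw [← Real.exp_nat_mul]; ring_nf

theorem norm_T_sub_one_le {c : ℝ} (hc : ∀ n : ℕ, ‖S.diffQuot (n : ℝ)⁻¹‖ ≤ c) {t : ℝ}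
    (ht : 0 ≤ t) : ‖S.T t - 1‖ ≤ Real.exp (c * t) - 1 := by
  have hc0 : 0 ≤ c := (norm_nonneg _).trans (hc 0)
  refine ContinuousLinearMap.opNorm_le_bound _
    (by linarith [Real.add_one_le_exp (c * t), mul_nonneg hc0 ht]) fun x => ?_
  have hq : Tendsto (fun n : ℕ => (⌊t * n⌋₊ : ℝ) / n) atTop (𝓝 t) :=
    (tendsto_nat_floor_mul_div_atTop ht).comp tendsto_natCast_atTop_atTop
  have hlhs : Tendsto (fun n : ℕ => ‖(S.T ((⌊t * n⌋₊ : ℝ) / n) - 1) x‖) atTop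
      (𝓝 ‖(S.T t - 1) x‖) := by
    have hT := (S.T_cont x t ht).tendsto.comp (tendsto_nhdsWithin_iff.mpr
      ⟨hq, Eventually.of_forall fun n => mem_Ici.mpr (by positivity)⟩)
    simpa using (hT.sub_const x).norm
  have hrhs : Tendsto (fun n : ℕ => (Real.exp (c * ((⌊t * n⌋₊ : ℝ) / n)) - 1) * ‖x‖) atTop
      (𝓝 ((Real.exp (c * t) - 1) * ‖x‖)) :=
    (((Real.continuous_exp.tendsto _).comp (hq.const_mul c)).sub_const 1).mul_const _
  refine le_of_tendsto_of_tendsto' hlhs hrhs fun n => ?_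
  exact (ContinuousLinearMap.le_opNorm _ x).trans
    (by gcongr; exact S.norm_T_div_natCast_sub_one_le hc _ n)

theorem norm_diffQuot_le {c : ℝ} (hc : ∀ n : ℕ, ‖S.diffQuot (n : ℝ)⁻¹‖ ≤ c) {t : ℝ}
    (ht₀ : 0 < t) (ht₁ : t ≤ 1) : ‖S.diffQuot t‖ ≤ c * Real.exp c := by
  have hc0 : 0 ≤ c := (norm_nonneg _).trans (hc 0)
  rw [diffQuot, norm_smul, norm_inv, Real.norm_of_nonneg ht₀.le, inv_mul_le_iff₀ ht₀]
  calc ‖S.T t - 1‖ ≤ Real.exp (c * t) - 1 := S.norm_T_sub_one_le hc ht₀.le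
    _ ≤ c * t * Real.exp (c * t) := Real.exp_sub_one_le_mul_exp _
    _ ≤ t * (c * Real.exp c) := by
        rw [mul_comm t, mul_right_comm]
        gcongr
        nlinarith

variable [CompleteSpace X]

theorem hasDerivWithinAt_integral_T (w : X) {t : ℝ} (ht : 0 ≤ t) :
    HasDerivWithinAt (fun u => ∫ s in (0 : ℝ)..u, S.T s w) (S.T t w) (Ici t) t :=
  have hcont := (S.T_cont w).mono fun _ (hs : t < _) => ht.trans hs.le
  intervalIntegral.integral_hasDerivWithinAt_right (S.intervalIntegrable_T w le_rfl ht)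
    (hcont.stronglyMeasurableAtFilter_nhdsWithin measurableSet_Ioi t)
    ((S.T_cont w t ht).mono fun _ (hs : t < _) => ht.trans hs.le)

theorem T_apply_integral (w : X) {h δ : ℝ} (hh : 0 ≤ h) (hδ : 0 ≤ δ) :
    S.T h (∫ s in (0 : ℝ)..δ, S.T s w) = ∫ s in h..h + δ, S.T s w := by
  rw [← ContinuousLinearMap.intervalIntegral_comp_comm _ (S.intervalIntegrable_T w le_rfl hδ)]
  have hcomp : ∀ s ∈ uIcc 0 δ, S.T h (S.T s w) = S.T (h + s) w := fun s hs => by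
    rw [S.T_add h s hh ((le_inf le_rfl hδ).trans hs.1)]
    rfl
  rw [intervalIntegral.integral_congr hcomp, intervalIntegral.integral_comp_add_left
    (fun s => S.T s w), add_zero]

theorem tendsto_inv_smul_integral (w : X) :
    Tendsto (fun δ : ℝ => δ⁻¹ • ∫ s in (0 : ℝ)..δ, S.T s w) (𝓝[>] 0) (𝓝 w) := by
  simpa [S.T_zero] using (S.hasDerivWithinAt_integral_T w le_rfl).tendsto_slope_zero_right_of_Ici

theorem tendsto_diffQuot_integral (w : X) {δ : ℝ} (hδ : 0 ≤ δ) :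
    Tendsto (fun t => S.diffQuot t (∫ s in (0 : ℝ)..δ, S.T s w)) (𝓝[>] 0)
      (𝓝 (S.T δ w - w)) := by
  have h := (S.hasDerivWithinAt_integral_T w hδ).tendsto_slope_zero_right_of_Ici.sub
    (S.tendsto_inv_smul_integral w)
  refine h.congr' (eventually_nhdsWithin_of_forall fun t (ht : 0 < t) => ?_)
  -- with `G u = ∫₀ᵘ T s w`: `T t (G δ) - G δ = (G (δ + t) - G δ) - (G t - G 0)`
  beta_reduce
  rw [diffQuot_apply, S.T_apply_integral w ht.le hδ, ← smul_sub,
    ← intervalIntegral.integral_interval_sub_left (S.intervalIntegrable_T w le_rfl (by positivity))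
      (S.intervalIntegrable_T w le_rfl ht.le), add_comm t δ]
  congr 1
  abel

theorem integral_mem_genDomain (w : X) {δ : ℝ} (hδ : 0 ≤ δ) :
    ∫ s in (0 : ℝ)..δ, S.T s w ∈ S.genDomain :=
  ⟨_, S.tendsto_diffQuot_integral w hδ⟩

theorem dense_genDomain : Dense S.genDomain := fun w =>
  mem_closure_of_tendsto (S.tendsto_inv_smul_integral w) <|
    eventually_nhdsWithin_of_forall fun δ (hδ : 0 < δ) => by
      rw [← Complex.coe_smul]
      exact S.smul_mem_genDomain _ (S.integral_mem_genDomain w hδ.le)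

theorem exists_mem_genDomain_apply_eq {ψ : StrongDual ℂ X} (hψ : ψ ≠ 0) (τ : ℂ) :
    ∃ v ∈ S.genDomain, ψ v = τ := by
  obtain ⟨x, hx, hψx⟩ : ∃ x ∈ S.genDomain, ψ x ≠ 0 := by
    by_contra! h
    exact hψ (DFunLike.coe_injective
      (Continuous.ext_on S.dense_genDomain ψ.continuous continuous_zero h))
  refine ⟨(τ / ψ x) • x, S.smul_mem_genDomain _ hx, ?_⟩
  rw [map_smul, smul_eq_mul, div_mul_cancel₀ _ hψx]

theorem exists_not_bddAbove_re_apply_diffQuot {y : X}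
    (hy : ¬ ∃ C, ∀ n : ℕ, ‖S.diffQuot (n : ℝ)⁻¹ y‖ ≤ C) :
    ∃ (φ : StrongDual ℂ X) (Y : X), φ Y = 1 ∧
      ¬ BddAbove (range fun n : ℕ => (φ (S.diffQuot (n : ℝ)⁻¹ Y)).re) := by
  obtain ⟨ψ, hψ⟩ : ∃ ψ : StrongDual ℂ X, ¬ ∃ C, ∀ n : ℕ, ‖ψ (S.diffQuot (n : ℝ)⁻¹ y)‖ ≤ C := by
    by_contra! h
    exact hy (exists_norm_le_of_forall_exists_norm_dual_le h)
  obtain ⟨μ, hμ⟩ := exists_not_bddAbove_re_mul hψ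
  have hψ0 : ψ ≠ 0 := by
    rintro rfl
    exact hψ ⟨0, by simp⟩
  -- correcting `μ • y` by a vector `v` of the domain normalises `ψ` without spoiling unboundedness,
  -- since `ψ (diffQuot v)` converges
  obtain ⟨v, ⟨L, hL⟩, hv⟩ := S.exists_mem_genDomain_apply_eq hψ0 (1 - μ * ψ y)
  refine ⟨ψ, μ • y + v, by simp [hv], fun ⟨a, ha⟩ => hμ ?_⟩
  obtain ⟨b, hb⟩ := ((Complex.continuous_re.tendsto _).comp ((ψ.continuous.tendsto L).comp
    (hL.comp (tendsto_inv_atTop_nhdsGT_zero.comp tendsto_natCast_atTop_atTop)))).bddBelow_range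
  refine ⟨a - b, forall_mem_range.2 fun n => ?_⟩
  have hsplit : ψ (S.diffQuot (n : ℝ)⁻¹ (μ • y + v))
      = μ * ψ (S.diffQuot (n : ℝ)⁻¹ y) + ψ (S.diffQuot (n : ℝ)⁻¹ v) := by
    rw [map_add, map_smul, map_add, map_smul, smul_eq_mul]
  have h1 := ha ⟨n, rfl⟩
  have h2 := hb ⟨n, rfl⟩
  simp only [hsplit, Complex.add_re, Function.comp_apply] at h1 h2
  linarith

theorem genDomain_eq_univ {c : ℝ} (hc : ∀ n : ℕ, ‖S.diffQuot (n : ℝ)⁻¹‖ ≤ c) :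
    S.genDomain = univ :=
  eq_univ_of_forall <| ContinuousLinearMap.exists_tendsto_of_dense
    (mem_of_superset (Ioc_mem_nhdsGT zero_lt_one) fun _ ht => S.norm_diffQuot_le hc ht.1 ht.2)
    S.dense_genDomain

theorem exists_tendsto_diffQuot_of_forall_norm_le {c : ℝ}
    (hc : ∀ n : ℕ, ‖S.diffQuot (n : ℝ)⁻¹‖ ≤ c) (x : X) :
    ∃ L, ‖L‖ ≤ c * Real.exp c * ‖x‖ ∧ Tendsto (fun t => S.diffQuot t x) (𝓝[>] 0) (𝓝 L) := by
  obtain ⟨L, hL⟩ : x ∈ S.genDomain := S.genDomain_eq_univ hc ▸ mem_univ x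
  refine ⟨L, le_of_tendsto hL.norm ?_, hL⟩
  filter_upwards [Ioc_mem_nhdsGT zero_lt_one] with t ht
  exact (ContinuousLinearMap.le_opNorm _ x).trans
    (by gcongr; exact S.norm_diffQuot_le hc ht.1 ht.2)

end C0Semigroup

/-- if the generator `A` is unbounded, there are a rank-one bounded
projection `P z = φ(z) • y` (with `φ y = 1`) such that `(e^{(1/n)A} P)^n y` does not
converge even weakly. -/
theorem stmt_2 {X : Type*} [NormedAddCommGroup X] [NormedSpace ℂ X] [CompleteSpace X]
    (Sg : C0Semigroup X) (domA : Set X) (A : X → X)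
    (hgen : IsGeneratorOf Sg domA A)
    (hunb : ¬ (domA = Set.univ ∧ ∃ C : ℝ, ∀ x : X, ‖A x‖ ≤ C * ‖x‖)) :
    ∃ (φ : X →L[ℂ] ℂ) (y : X), φ y = 1 ∧
      ¬ ∃ z : X, ∀ ψ : X →L[ℂ] ℂ,
          Tendsto
            (fun n : ℕ => ψ ((((Sg.T (1 / n)).comp (φ.smulRight y)) ^ n) y))
            atTop (𝓝 (ψ z)) := by
  by_cases hB : ∀ y : X, ∃ C, ∀ n : ℕ, ‖Sg.diffQuot (n : ℝ)⁻¹ y‖ ≤ C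
  · obtain ⟨c, hc⟩ := banach_steinhaus hB
    have hA : ∀ x, x ∈ domA ∧ ‖A x‖ ≤ c * Real.exp c * ‖x‖ := fun x => by
      obtain ⟨L, hLx, hL⟩ := Sg.exists_tendsto_diffQuot_of_forall_norm_le hc x
      simp only [C0Semigroup.diffQuot_apply] at hL
      have hx := (hgen.1 x).2 ⟨L, hL⟩
      exact ⟨hx, tendsto_nhds_unique (hgen.2 x hx) hL ▸ hLx⟩
    exact absurd ⟨eq_univ_of_forall fun x => (hA x).1, _, fun x => (hA x).2⟩ hunb
  · obtain ⟨y, hy⟩ := not_forall.mp hB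
    obtain ⟨φ, Y, hφY, hre⟩ := Sg.exists_not_bddAbove_re_apply_diffQuot hy
    refine ⟨φ, Y, hφY, fun ⟨z, hz⟩ => hre ?_⟩
    simp only [one_div] at hz
    exact Sg.bddAbove_re_apply_diffQuot_of_tendsto hφY (hz φ)
end

section
/- Let A be the generator of a C₀-semigroup (e^{tA})_{t≥0} on a complex Banach space X, let φ ∈ X* and x ∈ dom A with φ(x) = 1, and let P_x be the rank-one projection P_x z = φ(z) x. Then lim_{n→∞} φ((e^{(1/n)A} P_x)^n x) = e^{φ(Ax)}. -/
open Filter Topology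

/-!
Along `x` the projection `P_x` collapses the product to scalars: `φ ∘ (M ∘ P_x) = φ(Mx) • φ`,
so `φ((e^{A/n} P_x)^n x) = φ(e^{A/n} x)^n`. Since `x ∈ dom A`,
`n (φ(e^{A/n} x) - 1) = φ(n (e^{A/n} x - x)) → φ(Ax)`, and `(1 + a_n)^n → e^c` whenever `n a_n → c`.
-/

namespace ContinuousLinearMap

variable {𝕜 X : Type*} [NontriviallyNormedField 𝕜] [NormedAddCommGroup X] [NormedSpace 𝕜 X]

lemma comp_comp_smulRight_self (M : X →L[𝕜] X) (φ : X →L[𝕜] 𝕜) (x : X) :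
    φ.comp (M.comp (φ.smulRight x)) = φ (M x) • φ := by
  ext z
  simp [mul_comm]

lemma apply_pow_comp_smulRight_apply_self (M : X →L[𝕜] X) (φ : X →L[𝕜] 𝕜) {x : X}
    (hφx : φ x = 1) (n : ℕ) :
    φ (((M.comp (φ.smulRight x)) ^ n) x) = φ (M x) ^ n := by
  induction n with
  | zero => simpa using hφx
  | succ n ih =>
    rw [pow_succ', mul_apply_eq_comp, ← comp_apply φ, comp_comp_smulRight_self, smul_apply, ih,
      smul_eq_mul, pow_succ, mul_comm]

end ContinuousLinearMap

lemma IsGeneratorOf.tendsto_nat_smul_sub {X : Type*} [NormedAddCommGroup X] [NormedSpace ℂ X]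
    {Sg : C0Semigroup X} {domA : Set X} {A : X → X} (hgen : IsGeneratorOf Sg domA A)
    {x : X} (hx : x ∈ domA) :
    Tendsto (fun n : ℕ => (n : ℝ) • (Sg.T (1 / n) x - x)) atTop (𝓝 (A x)) := by
  have h_inv : Tendsto (fun n : ℕ => 1 / (n : ℝ)) atTop (𝓝[>] 0) :=
    tendsto_nhdsWithin_of_tendsto_nhds_of_eventually_within _ tendsto_one_div_atTop_nhds_zero_nat
      ((eventually_gt_atTop 0).mono fun n hn => by simpa using hn)
  exact ((hgen.2 x hx).comp h_inv).congr fun n => by simp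

theorem stmt_8_general {X : Type*} [NormedAddCommGroup X] [NormedSpace ℂ X]
    (Sg : C0Semigroup X) (domA : Set X) (A : X → X)
    (hgen : IsGeneratorOf Sg domA A)
    (φ : X →L[ℂ] ℂ) (x : X) (hx : x ∈ domA) (hφx : φ x = 1) :
    Tendsto (fun n : ℕ => φ ((((Sg.T (1 / n)).comp (φ.smulRight x)) ^ n) x)) atTop
      (𝓝 (Complex.exp (φ (A x)))) := by
  have h_deriv : Tendsto (fun n : ℕ => (n : ℂ) * (φ (Sg.T (1 / n) x) - 1)) atTop
      (𝓝 (φ (A x))) := by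
    convert (φ.continuous.tendsto _).comp (hgen.tendsto_nat_smul_sub hx) using 2 with n
    simp [hφx]
  simp_rw [ContinuousLinearMap.apply_pow_comp_smulRight_apply_self _ φ hφx]
  simpa using Complex.tendsto_one_add_pow_exp_of_tendsto h_deriv

/-- for `x ∈ dom A` with `φ x = 1` and `P_x z = φ(z) • x`, one has
`φ((e^{(1/n)A} P_x)^n x) → e^{φ(Ax)}`. -/
theorem stmt_8 {X : Type*} [NormedAddCommGroup X] [NormedSpace ℂ X] [CompleteSpace X]
    (Sg : C0Semigroup X) (domA : Set X) (A : X → X)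
    (hgen : IsGeneratorOf Sg domA A)
    (φ : X →L[ℂ] ℂ) (x : X) (hx : x ∈ domA) (hφx : φ x = 1) :
    Tendsto (fun n : ℕ => φ ((((Sg.T (1 / n)).comp (φ.smulRight x)) ^ n) x)) atTop
      (𝓝 (Complex.exp (φ (A x)))) :=
  stmt_8_general Sg domA A hgen φ x hx hφx
end

section
/- Let A be a densely defined linear operator on a complex Banach space X and let φ ∈ X* with φ ∉ dom A*. Then for every z ∈ dom A with φ(z) = 1, every ε > 0 and every M ∈ ℝ, there exists x ∈ dom A with ‖x − z‖ < ε, φ(x) = 1 and Re φ(Ax) ≥ M. -/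
/-! The functional `x ↦ φ (A x)` is unbounded on `dom A`, hence also on the hyperplane
`dom A ∩ ker φ` (a functional bounded on a hyperplane is bounded). An unbounded functional takes
every value on every ball, so some `w ∈ dom A ∩ ker φ` with `‖w‖ < ε` has `φ (A w) = M - φ (A z)`,
and `x = z + w` works. -/

namespace LinearMap

variable {𝕜 E : Type*} [NontriviallyNormedField 𝕜] [SeminormedAddCommGroup E] [NormedSpace 𝕜 E]

theorem exists_norm_lt_apply_eq_of_not_continuous {f : E →ₗ[𝕜] 𝕜} (hf : ¬Continuous f)
    {δ : ℝ} (hδ : 0 < δ) (c : 𝕜) : ∃ w, ‖w‖ < δ ∧ f w = c := by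
  have hunbdd : ¬∃ C, ∀ x, ‖f x‖ ≤ C * ‖x‖ := fun ⟨C, hC⟩ =>
    hf (AddMonoidHomClass.continuous_of_bound f C hC)
  push Not at hunbdd
  obtain ⟨u, hu⟩ := hunbdd (‖c‖ / δ)
  have hfu : f u ≠ 0 := by
    rintro h
    rw [h, norm_zero] at hu
    exact hu.not_ge (by positivity)
  refine ⟨(c / f u) • u, ?_, by simp [hfu]⟩
  rw [norm_smul, norm_div, div_mul_eq_mul_div, div_lt_iff₀ (norm_pos_iff.mpr hfu)]
  calc ‖c‖ * ‖u‖ = δ * (‖c‖ / δ * ‖u‖) := by field_simp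
    _ < δ * ‖f u‖ := mul_lt_mul_of_pos_left hu hδ

theorem continuous_of_continuous_domRestrict_ker {f : E →ₗ[𝕜] 𝕜} (ℓ : E →L[𝕜] 𝕜) {z : E}
    (hz : ℓ z = 1) (h : Continuous (f.domRestrict (ker (ℓ : E →ₗ[𝕜] 𝕜)))) :
    Continuous f := by
  have hdecomp : ∀ x, f x =
      f.domRestrict (ker (ℓ : E →ₗ[𝕜] 𝕜)) ⟨x - ℓ x • z, by simp [hz]⟩ + ℓ x * f z := by
    intro x
    simp
  rw [funext hdecomp]
  exact (h.comp (Continuous.subtype_mk (by fun_prop) _)).add (ℓ.continuous.mul continuous_const)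

end LinearMap

theorem stmt_9_general {X : Type*} [NormedAddCommGroup X] [NormedSpace ℂ X]
    (A : X →ₗ.[ℂ] X)
    (φ : X →L[ℂ] ℂ)
    (hφ : ¬ ∃ C : ℝ, ∀ x : A.domain, ‖φ (A x)‖ ≤ C * ‖(x : X)‖)
    (z : A.domain) (hz : φ (z : X) = 1) (ε : ℝ) (hε : 0 < ε) (M : ℝ) :
    ∃ x : A.domain, ‖(x : X) - (z : X)‖ < ε ∧ φ (x : X) = 1 ∧ M ≤ (φ (A x)).re := by
  set f : A.domain →ₗ[ℂ] ℂ := (φ : X →ₗ[ℂ] ℂ) ∘ₗ A.toFun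
  set ℓ : A.domain →L[ℂ] ℂ := φ.comp A.domain.subtypeL
  have hf : ¬Continuous f := by
    intro hcont
    obtain ⟨C, -, hC⟩ := (⟨f, hcont⟩ : A.domain →L[ℂ] ℂ).bound
    exact hφ ⟨C, hC⟩
  obtain ⟨w, hw, hfw⟩ := LinearMap.exists_norm_lt_apply_eq_of_not_continuous
    (mt (f.continuous_of_continuous_domRestrict_ker ℓ hz) hf) hε (M - f z)
  have hℓw : φ (w : X) = 0 := w.2
  refine ⟨z + w, by simpa using hw, by simp [hz, hℓw], ?_⟩
  have hfx : f (z + w) = M := by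
    rw [map_add, ← LinearMap.domRestrict_apply, hfw, add_sub_cancel]
  exact (congrArg Complex.re hfx).ge

/-- if `A` is a densely defined operator and `φ ∉ dom A*` (i.e. the
functional `x ↦ φ(Ax)` is unbounded on `dom A`), then near any `z ∈ dom A` with
`φ z = 1` one can find `x ∈ dom A` with `φ x = 1` and `Re φ(Ax)` arbitrarily large. -/
theorem stmt_9 {X : Type*} [NormedAddCommGroup X] [NormedSpace ℂ X] [CompleteSpace X]
    (A : X →ₗ.[ℂ] X) (hdense : Dense (A.domain : Set X))
    (φ : X →L[ℂ] ℂ)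
    (hφ : ¬ ∃ C : ℝ, ∀ x : A.domain, ‖φ (A x)‖ ≤ C * ‖(x : X)‖)
    (z : A.domain) (hz : φ (z : X) = 1) (ε : ℝ) (hε : 0 < ε) (M : ℝ) :
    ∃ x : A.domain, ‖(x : X) - (z : X)‖ < ε ∧ φ (x : X) = 1 ∧ M ≤ (φ (A x)).re :=
  stmt_9_general A φ hφ z hz ε hε M
end
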